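/- Let Λ ⊂ ℝ² be such that ([0,1]², Λ) is a spectral pair. Then Λ belongs to one of the following two classes: either there exist α ∈ ℝ and a function β : ℤ → [0,1) such that Λ = { (α + m, β(m) + n) : m, n ∈ ℤ }, or there exist α ∈ ℝ and a function β : ℤ → [0,1) such that Λ = { (β(n) + m, α + n) : m, n ∈ ℤ }. -/

import Mathlib

open MeasureTheory

/-- The exponential `e_λ(x) = e^{2πi λ·x}` on `ℝ²`. -/
noncomputable def expFn2 (l : ℝ × ℝ) : ℝ × ℝ → ℂ :=
  fun x => Complex.exp (2 * Real.pi * Complex.I * (l.1 * x.1 + l.2 * x.2))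

/-- The closed unit square `[0,1]²`. -/
def unitSquare : Set (ℝ × ℝ) := Set.Icc (0 : ℝ) 1 ×ˢ Set.Icc (0 : ℝ) 1

open Classical in
/-- The element of `L²(Ω)` determined by a function `f : ℝ² → ℂ`
(junk value `0` if `f` is not square-integrable on `Ω`). -/
noncomputable def toL2 (Ω : Set (ℝ × ℝ)) (f : ℝ × ℝ → ℂ) : Lp ℂ 2 (volume.restrict Ω) :=
  if h : MemLp f 2 (volume.restrict Ω) then h.toLp f else 0

/-- `(Ω, Λ)` is a spectral pair: the restrictions `e_λ|_Ω`, `λ ∈ Λ`, are pairwise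
orthogonal nonzero elements of `L²(Ω)` whose linear span is dense in `L²(Ω)`. -/
def IsSpectralPair (Ω : Set (ℝ × ℝ)) (Λ : Set (ℝ × ℝ)) : Prop :=
  (∀ l ∈ Λ, toL2 Ω (expFn2 l) ≠ 0) ∧
  (∀ l ∈ Λ, ∀ m ∈ Λ, l ≠ m → (inner ℂ (toL2 Ω (expFn2 l)) (toL2 Ω (expFn2 m)) : ℂ) = 0) ∧
  Dense (↑(Submodule.span ℂ ((fun l => toL2 Ω (expFn2 l)) '' Λ)) :
    Set (Lp ℂ 2 (volume.restrict Ω)))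

/-! ### Auxiliary analytic lemmas -/

open Complex Real in
/-- The one-dimensional integral `∫₀¹ e^{2πisx} dx`. -/
noncomputable def oneD (s : ℝ) : ℂ := ∫ x in Set.Icc (0:ℝ) 1, Complex.exp (2*π*Complex.I*s*x)

open Complex Real

lemma oneD_zero : oneD 0 = 1 := by
  simp [oneD, Real.volume_Icc]

lemma oneD_of_ne (s : ℝ) (hs : s ≠ 0) :
    oneD s = (Complex.exp (2*π*Complex.I*s) - 1) / (2*π*Complex.I*s) := by
  have hc : (2*π*Complex.I*(s:ℂ)) ≠ 0 := by
    simp [Real.pi_ne_zero, Complex.I_ne_zero, hs]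
  have : oneD s = ∫ x in (0:ℝ)..1, Complex.exp ((2*π*Complex.I*s) * x) := by
    rw [oneD, intervalIntegral.integral_of_le zero_le_one, integral_Icc_eq_integral_Ioc]
  rw [this, integral_exp_mul_complex hc]
  simp

lemma oneD_eq_zero_iff (s : ℝ) : oneD s = 0 ↔ (∃ n : ℤ, s = n) ∧ s ≠ 0 := by
  rcases eq_or_ne s 0 with rfl | hs
  · simp [oneD_zero]
  · rw [oneD_of_ne s hs]
    have hc : (2*π*Complex.I*(s:ℂ)) ≠ 0 := by
      simp [Real.pi_ne_zero, Complex.I_ne_zero, hs]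
    rw [div_eq_zero_iff]
    simp only [hc, or_false, sub_eq_zero]
    rw [show (2*π*Complex.I*(s:ℂ)) = s * (2*π*Complex.I) by ring] at *
    rw [Complex.exp_eq_one_iff]
    constructor
    · rintro ⟨n, hn⟩
      have h2 : (2*(π:ℂ)*Complex.I) ≠ 0 := by simp [Real.pi_ne_zero, Complex.I_ne_zero]
      have : (s:ℂ) = n := mul_right_cancel₀ h2 hn
      exact ⟨⟨n, by exact_mod_cast this⟩, hs⟩
    · rintro ⟨⟨n, rfl⟩, -⟩
      exact ⟨n, by push_cast; ring⟩

lemma abs_expFn2 (l x : ℝ × ℝ) : ‖expFn2 l x‖ = 1 := by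
  rw [expFn2]
  rw [show (2 * (Real.pi:ℂ) * Complex.I * (l.1 * x.1 + l.2 * x.2))
      = ((2 * Real.pi * (l.1 * x.1 + l.2 * x.2) : ℝ) : ℂ) * Complex.I by push_cast; ring]
  exact Complex.norm_exp_ofReal_mul_I _

lemma volume_unitSquare : volume unitSquare < ⊤ := by
  have : unitSquare = Set.Icc ((0:ℝ),(0:ℝ)) (1,1) := by rw [unitSquare, Set.Icc_prod_Icc]
  rw [this]
  exact isCompact_Icc.measure_lt_top

lemma memL2 (l : ℝ × ℝ) : MemLp (expFn2 l) 2 (volume.restrict unitSquare) := by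
  haveI : Fact (volume unitSquare < ⊤) := ⟨volume_unitSquare⟩
  have hm : AEStronglyMeasurable (expFn2 l) (volume.restrict unitSquare) := by
    apply Continuous.aestronglyMeasurable
    unfold expFn2
    fun_prop
  exact MemLp.of_bound hm 1 (Filter.Eventually.of_forall fun x => by
    rw [abs_expFn2])

lemma inner_toLp (l m : ℝ × ℝ) :
    (inner ℂ ((memL2 l).toLp (expFn2 l)) ((memL2 m).toLp (expFn2 m)) : ℂ)
      = oneD (m.1 - l.1) * oneD (m.2 - l.2) := by
  rw [L2.inner_def]
  have h1 : ∀ᵐ a ∂(volume.restrict unitSquare),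
      (inner ℂ (((memL2 l).toLp (expFn2 l)) a) (((memL2 m).toLp (expFn2 m)) a) : ℂ)
        = (starRingEnd ℂ) (expFn2 l a) * expFn2 m a := by
    filter_upwards [(memL2 l).coeFn_toLp, (memL2 m).coeFn_toLp] with a ha hb
    rw [ha, hb, RCLike.inner_apply']
  rw [integral_congr_ae h1]
  have h2 : ∀ a : ℝ × ℝ, (starRingEnd ℂ) (expFn2 l a) * expFn2 m a
      = Complex.exp (2*π*Complex.I*(m.1-l.1)*a.1) * Complex.exp (2*π*Complex.I*(m.2-l.2)*a.2) := by
    intro a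
    rw [expFn2, expFn2, ← Complex.exp_conj, ← Complex.exp_add]
    have : (starRingEnd ℂ) (2 * (Real.pi:ℂ) * Complex.I * (l.1 * a.1 + l.2 * a.2))
        = -(2 * (Real.pi:ℂ) * Complex.I * (l.1 * a.1 + l.2 * a.2)) := by
      rw [show (2 * (Real.pi:ℂ) * Complex.I * (l.1 * a.1 + l.2 * a.2))
          = ((2 * Real.pi * (l.1 * a.1 + l.2 * a.2) : ℝ) : ℂ) * Complex.I by push_cast; ring]
      rw [map_mul, Complex.conj_ofReal, Complex.conj_I]
      ring
    rw [this, ← Complex.exp_add]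
    congr 1
    ring
  simp_rw [h2]
  have h3 : (volume : Measure (ℝ × ℝ)).restrict unitSquare
      = (volume.restrict (Set.Icc (0:ℝ) 1)).prod (volume.restrict (Set.Icc (0:ℝ) 1)) := by
    rw [Measure.prod_restrict, ← Measure.volume_eq_prod]; rfl
  rw [h3]
  rw [integral_prod_mul (μ := volume.restrict (Set.Icc (0:ℝ) 1))
    (ν := volume.restrict (Set.Icc (0:ℝ) 1))
    (fun x : ℝ => Complex.exp (2*π*Complex.I*(m.1-l.1)*(x:ℂ)))
    (fun y : ℝ => Complex.exp (2*π*Complex.I*(m.2-l.2)*(y:ℂ)))]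
  rw [oneD, oneD]
  simp only [Complex.ofReal_sub]

lemma toL2_eq (l : ℝ × ℝ) : toL2 unitSquare (expFn2 l) = (memL2 l).toLp (expFn2 l) := by
  rw [toL2, dif_pos (memL2 l)]

lemma inner_toL2 (l m : ℝ × ℝ) :
    (inner ℂ (toL2 unitSquare (expFn2 l)) (toL2 unitSquare (expFn2 m)) : ℂ)
      = oneD (m.1 - l.1) * oneD (m.2 - l.2) := by
  rw [toL2_eq, toL2_eq, inner_toLp]

/-! ### Combinatorial notions -/

/-- `x` and `y` differ by an integer. -/
def Drel (x y : ℝ) : Prop := ∃ n : ℤ, x - y = n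

/-- `x` and `y` differ by a nonzero integer. -/
def Pc (x y : ℝ) : Prop := Drel x y ∧ x ≠ y

/-- Orthogonality condition for exponentials on the unit square. -/
def Orth (l m : ℝ × ℝ) : Prop := Pc l.1 m.1 ∨ Pc l.2 m.2

lemma Drel.refl (x : ℝ) : Drel x x := ⟨0, by simp⟩

lemma Drel.symm {x y : ℝ} (h : Drel x y) : Drel y x := by
  obtain ⟨n, hn⟩ := h; exact ⟨-n, by push_cast; linarith⟩

lemma Drel.trans {x y z : ℝ} (h : Drel x y) (h' : Drel y z) : Drel x z := by
  obtain ⟨n, hn⟩ := h; obtain ⟨m, hm⟩ := h'; exact ⟨n + m, by push_cast; linarith⟩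

/-! ### From the spectral pair hypothesis to the combinatorics -/

lemma spectral_orth {Λ : Set (ℝ × ℝ)} (h : IsSpectralPair unitSquare Λ) :
    ∀ l ∈ Λ, ∀ m ∈ Λ, l ≠ m → Orth l m := by
  intro l hl m hm hne
  have h0 := h.2.1 l hl m hm hne
  rw [inner_toL2] at h0
  rcases mul_eq_zero.1 h0 with h1 | h1
  · obtain ⟨⟨n, hn⟩, hn0⟩ := (oneD_eq_zero_iff _).1 h1
    exact Or.inl ⟨⟨-n, by push_cast; linarith⟩, fun he => hn0 (by rw [he, sub_self])⟩
  · obtain ⟨⟨n, hn⟩, hn0⟩ := (oneD_eq_zero_iff _).1 h1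
    exact Or.inr ⟨⟨-n, by push_cast; linarith⟩, fun he => hn0 (by rw [he, sub_self])⟩

lemma spectral_max {Λ : Set (ℝ × ℝ)} (h : IsSpectralPair unitSquare Λ) :
    ∀ t : ℝ × ℝ, ∃ l ∈ Λ, ¬ Orth t l := by
  intro t
  by_contra hc
  push_neg at hc
  set v := toL2 unitSquare (expFn2 t) with hv
  have hker : (Submodule.span ℂ ((fun l => toL2 unitSquare (expFn2 l)) '' Λ))
      ≤ (innerSL ℂ v).ker := by
    rw [Submodule.span_le]
    rintro u ⟨l, hl, rfl⟩
    simp only [SetLike.mem_coe, LinearMap.mem_ker]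
    have hinner : (innerSL ℂ v) (toL2 unitSquare (expFn2 l))
        = (inner ℂ v (toL2 unitSquare (expFn2 l)) : ℂ) := rfl
    rw [ContinuousLinearMap.coe_coe, hinner, hv, inner_toL2]
    rcases hc l hl with ⟨⟨n, hn⟩, hne⟩ | ⟨⟨n, hn⟩, hne⟩
    · have : oneD (l.1 - t.1) = 0 := (oneD_eq_zero_iff _).2
        ⟨⟨-n, by push_cast; linarith⟩, fun h0 => hne (by linarith [sub_eq_zero.1 h0])⟩
      rw [this, zero_mul]
    · have : oneD (l.2 - t.2) = 0 := (oneD_eq_zero_iff _).2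
        ⟨⟨-n, by push_cast; linarith⟩, fun h0 => hne (by linarith [sub_eq_zero.1 h0])⟩
      rw [this, mul_zero]
  have hclosed := ContinuousLinearMap.isClosed_ker (innerSL ℂ v)
  have htop := Submodule.topologicalClosure_minimal _ hker hclosed
  have hdense : (Submodule.span ℂ
      ((fun l => toL2 unitSquare (expFn2 l)) '' Λ)).topologicalClosure = ⊤ :=
    Submodule.dense_iff_topologicalClosure_eq_top.mp h.2.2
  rw [hdense] at htop
  have hvmem : v ∈ (innerSL ℂ v).ker := htop Submodule.mem_top
  have hzero : (inner ℂ v v : ℂ) = 0 := hvmem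
  rw [hv, inner_toL2] at hzero
  simp [oneD_zero] at hzero

/-! ### The combinatorial classification -/

lemma colCase (Λ : Set (ℝ × ℝ))
    (H1 : ∀ l ∈ Λ, ∀ m ∈ Λ, l ≠ m → Orth l m)
    (H2 : ∀ t : ℝ × ℝ, ∃ l ∈ Λ, ¬ Orth t l)
    (Hall : ∀ l ∈ Λ, ∀ m ∈ Λ, Drel l.1 m.1) :
    ∃ (α : ℝ) (β : ℤ → ℝ), (∀ m : ℤ, β m ∈ Set.Ico (0 : ℝ) 1) ∧
      Λ = {p : ℝ × ℝ | ∃ m n : ℤ, p = (α + m, β m + n)} := by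
  obtain ⟨l0, hl0, -⟩ := H2 (0, 0)
  set α := l0.1 with hα
  have hT : ∀ t : ℝ × ℝ, Drel t.1 α → ∃ l ∈ Λ, l.1 = t.1 ∧ ¬ Pc t.2 l.2 := by
    intro t ht
    obtain ⟨l, hl, hOrth⟩ := H2 t
    obtain ⟨h1, h2⟩ := not_or.1 hOrth
    have hD : Drel t.1 l.1 := ht.trans (Hall l0 hl0 l hl)
    have heq : t.1 = l.1 := by by_contra hne; exact h1 ⟨hD, hne⟩
    exact ⟨l, hl, heq.symm, h2⟩
  have hpick : ∀ m : ℤ, ∃ l, l ∈ Λ ∧ l.1 = α + m := by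
    intro m
    obtain ⟨l, hl, he, -⟩ := hT (α + m, 0) ⟨m, by show α + (m:ℝ) - α = m; ring⟩
    exact ⟨l, hl, he⟩
  choose pick hpickΛ hpick1 using hpick
  set β : ℤ → ℝ := fun m => Int.fract (pick m).2 with hβ
  have hfr : ∀ m : ℤ, (pick m).2 - β m = (⌊(pick m).2⌋ : ℝ) := by
    intro m
    show (pick m).2 - Int.fract (pick m).2 = _
    exact Int.self_sub_fract _
  have hcoh : ∀ l ∈ Λ, ∀ m : ℤ, l.1 = α + m → Drel l.2 (pick m).2 := by
    intro l hl m he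
    rcases eq_or_ne l (pick m) with rfl | hne
    · exact Drel.refl _
    · rcases H1 l hl (pick m) (hpickΛ m) hne with ⟨-, hne1⟩ | ⟨hd, -⟩
      · exact absurd (he.trans (hpick1 m).symm) hne1
      · exact hd
  refine ⟨α, β, fun m => ⟨Int.fract_nonneg _, Int.fract_lt_one _⟩, ?_⟩
  ext p
  simp only [Set.mem_setOf_eq]
  constructor
  · intro hp
    obtain ⟨m, hm⟩ := Hall p hp l0 hl0
    have hp1 : p.1 = α + m := by rw [hα]; linarith
    obtain ⟨n, hn⟩ := hcoh p hp m hp1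
    refine ⟨m, n + ⌊(pick m).2⌋, ?_⟩
    have h2 : p.2 = β m + (n + ⌊(pick m).2⌋ : ℤ) := by
      have := hfr m; push_cast; linarith
    exact Prod.ext hp1 h2
  · rintro ⟨m, n, rfl⟩
    obtain ⟨l, hl, he1, hP⟩ := hT (α + m, β m + n) ⟨m, by show α + (m:ℝ) - α = m; ring⟩
    obtain ⟨k, hk⟩ := hcoh l hl m he1
    have hDβ : Drel (β m + n) l.2 := by
      refine ⟨n - ⌊(pick m).2⌋ - k, ?_⟩
      have := hfr m; push_cast; linarith
    have h2 : β m + n = l.2 := by by_contra hne; exact hP ⟨hDβ, hne⟩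
    have : ((α + m : ℝ), β m + (n:ℝ)) = l := Prod.ext he1.symm h2
    rw [this]; exact hl

lemma mainComb (Λ : Set (ℝ × ℝ))
    (H1 : ∀ l ∈ Λ, ∀ m ∈ Λ, l ≠ m → Orth l m)
    (H2 : ∀ t : ℝ × ℝ, ∃ l ∈ Λ, ¬ Orth t l) :
    (∃ (α : ℝ) (β : ℤ → ℝ), (∀ m : ℤ, β m ∈ Set.Ico (0 : ℝ) 1) ∧
        Λ = {p : ℝ × ℝ | ∃ m n : ℤ, p = (α + m, β m + n)}) ∨
    (∃ (α : ℝ) (β : ℤ → ℝ), (∀ n : ℤ, β n ∈ Set.Ico (0 : ℝ) 1) ∧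
        Λ = {p : ℝ × ℝ | ∃ m n : ℤ, p = (β n + m, α + n)}) := by
  by_cases hA : ∀ l ∈ Λ, ∀ m ∈ Λ, Drel l.1 m.1
  · exact Or.inl (colCase Λ H1 H2 hA)
  · right
    push_neg at hA
    obtain ⟨lam, hlam, mu, hmu, hnd⟩ := hA
    have Hall2 : ∀ l ∈ Λ, ∀ m ∈ Λ, Drel l.2 m.2 := by
      intro ν hν ρ hρ
      by_contra hnd2
      have hνρ : ν ≠ ρ := fun h => hnd2 (h ▸ Drel.refl _)
      have hD1 : Drel ν.1 ρ.1 := by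
        rcases H1 ν hν ρ hρ hνρ with ⟨hd, -⟩ | ⟨hd, -⟩
        · exact hd
        · exact absurd hd hnd2
      have key : ∀ σ ∈ Λ, ¬ Drel σ.1 ν.1 → False := by
        intro σ hσ hσν
        have hσρ : ¬ Drel σ.1 ρ.1 := fun hh => hσν (hh.trans hD1.symm)
        have hσν' : σ ≠ ν := fun h => hσν (h ▸ Drel.refl _)
        have hσρ' : σ ≠ ρ := fun h => hσρ (h ▸ Drel.refl _)
        have d1 : Drel σ.2 ν.2 := by
          rcases H1 σ hσ ν hν hσν' with ⟨hd, -⟩ | ⟨hd, -⟩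
          exacts [absurd hd hσν, hd]
        have d2 : Drel σ.2 ρ.2 := by
          rcases H1 σ hσ ρ hρ hσρ' with ⟨hd, -⟩ | ⟨hd, -⟩
          exacts [absurd hd hσρ, hd]
        exact hnd2 (d1.symm.trans d2)
      by_cases hln : Drel lam.1 ν.1
      · exact key mu hmu fun hh => hnd (hln.trans hh.symm)
      · exact key lam hlam hln
    set Λ' : Set (ℝ × ℝ) := (fun p : ℝ × ℝ => (p.2, p.1)) '' Λ with hΛ'
    have hmem : ∀ p : ℝ × ℝ, p ∈ Λ ↔ (p.2, p.1) ∈ Λ' := by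
      intro p
      constructor
      · exact fun hp => ⟨p, hp, rfl⟩
      · rintro ⟨q, hq, he⟩
        have h1 := (Prod.ext_iff.1 he).1
        have h2 := (Prod.ext_iff.1 he).2
        have : q = p := Prod.ext h2 h1
        rwa [this] at hq
    have H1' : ∀ l ∈ Λ', ∀ m ∈ Λ', l ≠ m → Orth l m := by
      rintro - ⟨l, hl, rfl⟩ - ⟨m, hm, rfl⟩ hne
      have : l ≠ m := fun h => hne (by rw [h])
      exact (H1 l hl m hm this).elim (fun h => Or.inr h) (fun h => Or.inl h)
    have H2' : ∀ t : ℝ × ℝ, ∃ l ∈ Λ', ¬ Orth t l := by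
      intro t
      obtain ⟨l, hl, ho⟩ := H2 (t.2, t.1)
      refine ⟨(l.2, l.1), ⟨l, hl, rfl⟩, fun hh => ho ?_⟩
      exact hh.elim (fun h => Or.inr h) (fun h => Or.inl h)
    have Hall' : ∀ l ∈ Λ', ∀ m ∈ Λ', Drel l.1 m.1 := by
      rintro - ⟨l, hl, rfl⟩ - ⟨m, hm, rfl⟩
      exact Hall2 l hl m hm
    obtain ⟨α, β, hβ, hEq⟩ := colCase Λ' H1' H2' Hall'
    refine ⟨α, β, hβ, ?_⟩
    ext p
    rw [hmem p, hEq]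
    simp only [Set.mem_setOf_eq]
    constructor
    · rintro ⟨m, n, he⟩
      refine ⟨n, m, ?_⟩
      rw [Prod.ext_iff] at he ⊢
      exact ⟨he.2, he.1⟩
    · rintro ⟨m, n, he⟩
      refine ⟨n, m, ?_⟩
      rw [Prod.ext_iff] at he ⊢
      exact ⟨he.2, he.1⟩

/-- If `([0,1]², Λ)` is a spectral pair, then `Λ` has one of the two forms
`{(α + m, β(m) + n)}` or `{(β(n) + m, α + n)}` for some `α ∈ ℝ` and `β : ℤ → [0,1)`. -/
theorem spectralPair_unitSquare_classification (Λ : Set (ℝ × ℝ))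
    (h : IsSpectralPair unitSquare Λ) :
    (∃ (α : ℝ) (β : ℤ → ℝ), (∀ m : ℤ, β m ∈ Set.Ico (0 : ℝ) 1) ∧
        Λ = {p : ℝ × ℝ | ∃ m n : ℤ, p = (α + m, β m + n)}) ∨
    (∃ (α : ℝ) (β : ℤ → ℝ), (∀ n : ℤ, β n ∈ Set.Ico (0 : ℝ) 1) ∧
        Λ = {p : ℝ × ℝ | ∃ m n : ℤ, p = (β n + m, α + n)}) :=
  mainComb Λ (spectral_orth h) (spectral_max h)
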